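/- arXiv:2112.00706 — 5 statements merged into one kernel-verified Lean document; each statement's English description precedes it below -/
import Mathlib

section
/- For positive integers a, b, c with a ≤ c, the sum over all ordered tuples (B_1, …, B_c) of pairwise disjoint sets with union [b] such that B_{a+1}, …, B_c are nonempty, of the product |B_1|!·|B_2|!···|B_c|!, equals b! · C(b + a − 1, c − 1). -/
/-! A family of pairwise disjoint blocks covering `[b]` is the family of fibres of a map
`f : [b] → [c]`, and `|B_1|! ⋯ |B_c|!` is the number of permutations `σ` of `[b]` for which
`f ∘ σ` is monotone. Exchanging the two sums, each of the `b!` permutations contributes the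
number of monotone maps `[b] → [c]` hitting every `i > a`. These are the `b`-multisets on `[c]`
containing `{a + 1, …, c}`; removing that forced part leaves an arbitrary multiset of size
`b - (c - a)` on `[c]`, and there are `C(b + a - 1, c - 1)` of those. -/

open Finset
open scoped Nat

section Fibers

variable {β ι : Type*} [Fintype β] [DecidableEq ι]

def fibers (f : β → ι) (i : ι) : Finset β := univ.filter (f · = i)

@[simp]
theorem mem_fibers {f : β → ι} {i : ι} {x : β} : x ∈ fibers f i ↔ f x = i := by
  simp [fibers]

@[simp]
theorem fibers_nonempty_iff {f : β → ι} {i : ι} :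
    (fibers f i).Nonempty ↔ i ∈ Set.range f := by
  simp [Finset.Nonempty]

theorem fibers_injective : Function.Injective (fibers : (β → ι) → ι → Finset β) := by
  intro f g h
  funext x
  exact (mem_fibers.1 (h ▸ mem_fibers.2 rfl : x ∈ fibers g (f x))).symm

theorem exists_fibers_eq_iff [DecidableEq β] [Fintype ι] {B : ι → Finset β} :
    (∃ f : β → ι, fibers f = B) ↔
      (∀ i j, i ≠ j → Disjoint (B i) (B j)) ∧ univ.biUnion B = univ := by
  constructor
  · rintro ⟨f, rfl⟩
    refine ⟨fun i j hij => disjoint_left.2 fun x hi hj => hij ?_, ?_⟩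
    · rw [mem_fibers] at hi hj
      rw [← hi, ← hj]
    · exact eq_univ_of_forall fun x => mem_biUnion.2 ⟨f x, mem_univ _, mem_fibers.2 rfl⟩
  · rintro ⟨hdisj, hcover⟩
    have hmem (x : β) : ∃ i, x ∈ B i := by
      simpa using eq_univ_iff_forall.1 hcover x
    choose f hf using hmem
    refine ⟨f, funext fun i => ext fun x =>
      ⟨fun hx => mem_fibers.1 hx ▸ hf x, fun hx => ?_⟩⟩
    rw [mem_fibers]
    by_contra hne
    exact disjoint_left.1 (hdisj _ _ hne) (hf x) hx

theorem sum_filter_disjoint_cover {M : Type*} [AddCommMonoid M] [DecidableEq β] [Fintype ι]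
    (P : (ι → Finset β) → Prop) [DecidablePred P] (w : (ι → Finset β) → M)
    [DecidablePred fun B : ι → Finset β =>
      (∀ i j, i ≠ j → Disjoint (B i) (B j)) ∧ univ.biUnion B = univ ∧ P B] :
    ∑ B ∈ univ.filter (fun B : ι → Finset β =>
        (∀ i j, i ≠ j → Disjoint (B i) (B j)) ∧ univ.biUnion B = univ ∧ P B), w B
      = ∑ f ∈ univ.filter (fun f : β → ι => P (fibers f)), w (fibers f) := by
  symm
  refine sum_bij (fun f _ => fibers f) (fun f hf => ?_) (fun f _ g _ h => fibers_injective h)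
    (fun B hB => ?_) (fun _ _ => rfl)
  · simp only [mem_filter, mem_univ, true_and] at hf ⊢
    exact and_assoc.1 ⟨exists_fibers_eq_iff.1 ⟨f, rfl⟩, hf⟩
  · simp only [mem_filter, mem_univ, true_and] at hB
    obtain ⟨f, rfl⟩ := exists_fibers_eq_iff.2 ⟨hB.1, hB.2.1⟩
    exact ⟨f, by simpa using hB.2.2, rfl⟩

end Fibers

section SortingPermutations

variable {α : Type*} [LinearOrder α] [Fintype α] {n : ℕ}

theorem card_perm_monotone_comp (f : Fin n → α) :
    Nat.card {σ : Equiv.Perm (Fin n) // Monotone (f ∘ σ)} = ∏ i, (fibers f i).card ! := by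
  have hsort : {σ : Equiv.Perm (Fin n) // Monotone (f ∘ σ)}
      ≃ {g : Equiv.Perm (Fin n) // f ∘ g = f} :=
    (Equiv.mulRight (Tuple.sort f)⁻¹).subtypeEquiv fun σ => by
      rw [← Tuple.comp_sort_eq_comp_iff_monotone, Equiv.coe_mulRight, Equiv.Perm.coe_mul,
        ← Function.comp_assoc, Equiv.Perm.inv_def, Equiv.comp_symm_eq]
  rw [Nat.card_congr hsort, Nat.card_eq_fintype_card, DomMulAct.stabilizer_card]
  simp [fibers, Fintype.card_subtype]

theorem sum_prod_factorial_card_fibers (Q : (Fin n → α) → Prop) [DecidablePred Q]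
    (hQ : ∀ f (σ : Equiv.Perm (Fin n)), Q (f ∘ σ) ↔ Q f) :
    ∑ f ∈ univ.filter Q, ∏ i, (fibers f i).card !
      = n ! * Nat.card {f // Monotone f ∧ Q f} := by
  have e : (Σ f : {f // Q f}, {σ : Equiv.Perm (Fin n) // Monotone (f.1 ∘ σ)})
      ≃ Equiv.Perm (Fin n) × {f // Monotone f ∧ Q f} :=
    { toFun := fun p => (p.2.1, ⟨p.1.1 ∘ p.2.1, p.2.2, (hQ _ _).2 p.1.2⟩)
      invFun := fun p => ⟨⟨p.2.1 ∘ p.1.symm, (hQ _ _).2 p.2.2.2⟩,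
        ⟨p.1, by simpa [Function.comp_assoc] using p.2.2.1⟩⟩
      left_inv := fun p => by ext <;> simp
      right_inv := fun p => by ext <;> simp }
  calc ∑ f ∈ univ.filter Q, ∏ i, (fibers f i).card !
      = ∑ f : {f // Q f}, Nat.card {σ : Equiv.Perm (Fin n) // Monotone (f.1 ∘ σ)} := by
        simp only [card_perm_monotone_comp]
        exact sum_subtype _ (by simp) _
    _ = n ! * Nat.card {f // Monotone f ∧ Q f} := by
        rw [← Nat.card_sigma, Nat.card_congr e, Nat.card_prod, Nat.card_perm,
          Nat.card_eq_fintype_card, Fintype.card_fin]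

end SortingPermutations

section MonotoneTuples

variable {α : Type*} [LinearOrder α] {n : ℕ}

noncomputable def monotoneEquivSym : {f : Fin n → α // Monotone f} ≃ Sym α n :=
  Equiv.ofBijective (fun f => Sym.mk (List.ofFn f.1) (by simp)) <| by
    refine ⟨fun f g h => Subtype.ext <| List.ofFn_injective ?_, fun m => ?_⟩
    · have hperm : (List.ofFn f.1).Perm (List.ofFn g.1) :=
        Multiset.coe_eq_coe.1 (congrArg Subtype.val h)
      exact hperm.eq_of_sortedLE f.2.sortedLE_ofFn g.2.sortedLE_ofFn
    · have hlen : (m.1.sort).length = n := by simp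
      refine ⟨⟨fun i => (m.1.sort).get (i.cast hlen.symm), ?_⟩, Sym.coe_injective ?_⟩
      · exact (Multiset.pairwise_sort _ _).sortedLE.monotone_get.comp
          (Fin.cast_strictMono _).monotone
      · have hl : List.ofFn (fun i : Fin n => (m.1.sort).get (i.cast hlen.symm)) = m.1.sort :=
          (List.ofFn_congr hlen _).symm.trans (List.ofFn_get _)
        simp only [Sym.coe_mk, hl, Multiset.sort_eq]
        rfl

@[simp]
theorem mem_monotoneEquivSym {f : {f : Fin n → α // Monotone f}} {a : α} :
    a ∈ monotoneEquivSym f ↔ ∃ i, f.1 i = a :=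
  Multiset.mem_coe.trans List.mem_ofFn

theorem card_monotone_forall_mem_range (S : Finset α) :
    Nat.card {f : Fin n → α // Monotone f ∧ ∀ a ∈ S, a ∈ Set.range f}
      = Nat.card {m : Sym α n // ∀ a ∈ S, a ∈ m} :=
  Nat.card_congr <| (Equiv.subtypeSubtypeEquivSubtypeInter _ _).symm.trans <|
    monotoneEquivSym.subtypeEquiv fun f => by simp [Set.mem_range]

end MonotoneTuples

section SymContaining

theorem card_sym_forall_mem {α : Type*} [DecidableEq α] [Fintype α] (S : Finset α) (k : ℕ) :
    Nat.card {m : Sym α (k + #S) // ∀ a ∈ S, a ∈ m} = (Fintype.card α).multichoose k := by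
  have hle (m : Sym α (k + #S)) (hm : ∀ a ∈ S, a ∈ m) : S.val ≤ m.1 :=
    (Multiset.le_iff_subset S.nodup).2 hm
  have e : {m : Sym α (k + #S) // ∀ a ∈ S, a ∈ m} ≃ Sym α k :=
    { toFun := fun m => ⟨m.1.1 - S.val, by rw [Multiset.card_sub (hle m.1 m.2)]; simp⟩
      invFun := fun m =>
        ⟨⟨m.1 + S.val, by simp⟩, fun a ha => Multiset.mem_add.2 (Or.inr ha)⟩
      left_inv := fun m =>
        Subtype.ext <| Sym.coe_injective <| tsub_add_cancel_of_le (hle m.1 m.2)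
      right_inv := fun m => Sym.coe_injective <| add_tsub_cancel_right _ _ }
  rw [Nat.card_congr e, Nat.card_eq_fintype_card, Sym.card_sym_eq_multichoose]

theorem card_sym_forall_mem_of_lt {α : Type*} {n : ℕ} {S : Finset α} (h : n < #S) :
    Nat.card {m : Sym α n // ∀ a ∈ S, a ∈ m} = 0 := by
  have : IsEmpty {m : Sym α n // ∀ a ∈ S, a ∈ m} := ⟨fun ⟨m, hm⟩ => h.not_ge <| by
    simpa using Multiset.card_le_card ((Multiset.le_iff_subset S.nodup).2 hm)⟩
  exact Nat.card_of_isEmpty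

end SymContaining

theorem Fin.card_filter_le_val (a c : ℕ) : #{i : Fin c | a ≤ (i : ℕ)} = c - a := by
  have := card_filter_add_card_filter_not (s := univ) (fun i : Fin c => (i : ℕ) < a)
  simp only [Fin.card_filter_val_lt, not_lt, card_univ, Fintype.card_fin] at this
  omega

open scoped Classical in
theorem stmt1_general (a b c : ℕ) (ha : 0 < a) (hac : a ≤ c) :
    ∑ B ∈ Finset.univ.filter
        (fun B : Fin c → Finset (Fin b) =>
          (∀ i j, i ≠ j → Disjoint (B i) (B j)) ∧
          Finset.univ.biUnion B = Finset.univ ∧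
          ∀ i : Fin c, a ≤ (i : ℕ) → (B i).Nonempty),
      ∏ i, Nat.factorial (B i).card
      = Nat.factorial b * Nat.choose (b + a - 1) (c - 1) := by
  set S : Finset (Fin c) := univ.filter fun i => a ≤ (i : ℕ)
  have hS : #S = c - a := Fin.card_filter_le_val a c
  have hcount : Nat.card {f : Fin b → Fin c //
        Monotone f ∧ ∀ i : Fin c, a ≤ (i : ℕ) → (fibers f i).Nonempty}
      = Nat.card {m : Sym (Fin c) b // ∀ i ∈ S, i ∈ m} := by
    rw [← card_monotone_forall_mem_range]
    exact Nat.card_congr (Equiv.subtypeEquivRight fun f => by simp [S])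
  rw [sum_filter_disjoint_cover (fun B => ∀ i : Fin c, a ≤ (i : ℕ) → (B i).Nonempty),
    sum_prod_factorial_card_fibers _ fun f σ => by simp [EquivLike.range_comp], hcount]
  rcases le_or_gt #S b with hle | hlt
  · obtain ⟨k, rfl⟩ := Nat.exists_eq_add_of_le' hle
    rw [card_sym_forall_mem, Fintype.card_fin, hS, Nat.multichoose_eq,
      show k + (c - a) + a - 1 = c + k - 1 by omega,
      Nat.choose_symm_of_eq_add (b := c - 1) (by omega)]
  · rw [card_sym_forall_mem_of_lt hlt, Nat.choose_eq_zero_of_lt (by omega)]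

open scoped Classical in
/-- For positive integers `a, b, c` with `a ≤ c`, the sum over all ordered tuples
`(B_1, …, B_c)` of pairwise disjoint sets with union `[b]` such that `B_{a+1}, …, B_c`
are nonempty, of the product `|B_1|! ⋯ |B_c|!`, equals `b! * C(b + a - 1, c - 1)`. -/
theorem stmt1 (a b c : ℕ) (ha : 0 < a) (hb : 0 < b) (hc : 0 < c) (hac : a ≤ c) :
    ∑ B ∈ Finset.univ.filter
        (fun B : Fin c → Finset (Fin b) =>
          (∀ i j, i ≠ j → Disjoint (B i) (B j)) ∧
          Finset.univ.biUnion B = Finset.univ ∧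
          ∀ i : Fin c, a ≤ (i : ℕ) → (B i).Nonempty),
      ∏ i, Nat.factorial (B i).card
      = Nat.factorial b * Nat.choose (b + a - 1) (c - 1) :=
  stmt1_general a b c ha hac
end

section
/- Define polynomials P_t: ℝ → ℝ for a mean-zero real random variable Z with finite moments m_s = E[Z^s] by P_0(x) = 1 and P_t(x) = x^t − ∑_{s=1}^{t} C(t, s)·m_s·P_{t−s}(x). Then for every real μ and every t ≥ 0, E[P_t(μ + Z)] = μ^t. -/
open MeasureTheory

/-! Expanding `(μ + Z)^t` binomially, `E[(μ + Z)^t] = ∑_s C(t,s) m_s μ^(t-s)`; the recursion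
defining `P_t` subtracts exactly the terms `s ≥ 1` once `E[P_{t-s}(μ + Z)] = μ^(t-s)` is known by
induction, and the term `s = 0` is `m_0 μ^t = μ^t`. -/

/-- The adjusted polynomials of a sequence of moments `m`:
`P_0(x) = 1` and `P_t(x) = x^t - ∑_{s=1}^t C(t,s) m_s P_{t-s}(x)`. -/
noncomputable def adjP (m : ℕ → ℝ) : ℕ → ℝ → ℝ
  | 0 => fun _ => 1
  | t + 1 => fun x =>
      x ^ (t + 1) -
        ∑ s ∈ Finset.range (t + 1),
          ((t + 1).choose (s + 1) : ℝ) * m (s + 1) * adjP m (t - s) x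
  decreasing_by exact Nat.lt_succ_of_le (Nat.sub_le t s)

section Moments

variable {D : Measure ℝ} (hint : ∀ s : ℕ, Integrable (fun z => z ^ s) D)
include hint

theorem integrable_add_pow (μ : ℝ) (n : ℕ) : Integrable (fun z => (μ + z) ^ n) D := by
  simp_rw [add_comm μ, add_pow]
  exact integrable_finsetSum _ fun k _ => ((hint k).mul_const _).mul_const _

theorem integral_add_pow (μ : ℝ) (n : ℕ) :
    ∫ z, (μ + z) ^ n ∂D =
      ∑ k ∈ Finset.range (n + 1), (n.choose k : ℝ) * (∫ z, z ^ k ∂D) * μ ^ (n - k) := by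
  simp_rw [add_comm μ, add_pow]
  rw [integral_finsetSum _ fun k _ => ((hint k).mul_const _).mul_const _]
  refine Finset.sum_congr rfl fun k _ => ?_
  rw [integral_mul_const, integral_mul_const]
  ring

theorem integrable_adjP_comp_add (m : ℕ → ℝ) (μ : ℝ) (t : ℕ) :
    Integrable (fun z => adjP m t (μ + z)) D := by
  induction t using Nat.strong_induction_on with
  | _ t ih =>
    match t with
    | 0 => simpa [adjP] using hint 0
    | t + 1 =>
      simp only [adjP]
      exact (integrable_add_pow hint μ (t + 1)).sub <| integrable_finsetSum _
        fun s _ => (ih (t - s) (Nat.lt_succ_of_le (Nat.sub_le t s))).const_mul _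

end Moments

theorem stmt11_general (D : Measure ℝ) [IsProbabilityMeasure D]
    (hint : ∀ s : ℕ, Integrable (fun z => z ^ s) D)
    (μ : ℝ) (t : ℕ) :
    ∫ z, adjP (fun s => ∫ z, z ^ s ∂D) t (μ + z) ∂D = μ ^ t := by
  set m : ℕ → ℝ := fun s => ∫ z, z ^ s ∂D
  induction t using Nat.strong_induction_on with
  | _ t ih =>
    match t with
    | 0 => simp [adjP]
    | t + 1 =>
      have hterm : ∀ s ∈ Finset.range (t + 1), Integrable
          (fun z => ((t + 1).choose (s + 1) : ℝ) * m (s + 1) * adjP m (t - s) (μ + z)) D :=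
        fun s _ => (integrable_adjP_comp_add hint m μ (t - s)).const_mul _
      have hval : ∀ s ∈ Finset.range (t + 1),
          ∫ z, ((t + 1).choose (s + 1) : ℝ) * m (s + 1) * adjP m (t - s) (μ + z) ∂D =
            ((t + 1).choose (s + 1) : ℝ) * m (s + 1) * μ ^ (t - s) := fun s _ => by
        rw [integral_const_mul, ih (t - s) (Nat.lt_succ_of_le (Nat.sub_le t s))]
      simp only [adjP]
      rw [integral_sub (integrable_add_pow hint μ (t + 1)) (integrable_finsetSum _ hterm),
        integral_finsetSum _ hterm, Finset.sum_congr rfl hval, integral_add_pow hint,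
        Finset.sum_range_succ']
      simp [m, Nat.add_sub_add_right]

/-- For a mean-zero real random variable `Z` with finite moments `m_s = E[Z^s]`,
the adjusted polynomials satisfy `E[P_t(μ + Z)] = μ^t` for every real `μ` and every `t`. -/
theorem stmt11 (D : Measure ℝ) [IsProbabilityMeasure D]
    (hint : ∀ s : ℕ, Integrable (fun z => z ^ s) D)
    (hmean : ∫ z, z ∂D = 0)
    (μ : ℝ) (t : ℕ) :
    ∫ z, adjP (fun s => ∫ z, z ^ s ∂D) t (μ + z) ∂D = μ ^ t :=
  stmt11_general D hint μ t
end

section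
/- Let D be a 1-Poincaré distribution on ℝ, let μ ∈ ℝ, and let P_t be the D-adjusted polynomials (P_0 = 1, P_t(x) = x^t − ∑_{s=1}^{t} C(t,s)·E_{z∼D}[z^s]·P_{t−s}(x)). Assume P_t′ = t·P_{t−1} and E_{z∼D(μ)}[P_t(z)] = μ^t for all t. Then for every t ≥ 1, E_{z∼D(μ)}[P_t(z)²] ≤ (μ² + t²)^t. -/
open MeasureTheory ProbabilityTheory

/-!
Apply the Poincaré inequality to the shifted polynomial `z ↦ P_{t+1}(μ + z)`: its mean is
`μ^{t+1}` by unbiasedness and its derivative is `(t+1) P_t(μ + z)`, so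
`E[P_{t+1}²] ≤ μ^{2(t+1)} + (t+1)² E[P_t²]`. Iterating this from `E[P_0²] = 1` gives
`(μ² + t²)^t`, since `μ^{2(t+1)} ≤ μ² (μ² + (t+1)²)^t`.
-/

def IsPoincare (D : Measure ℝ) : Prop :=
  ∀ f : ℝ → ℝ, Differentiable ℝ f → variance f D ≤ ∫ z, deriv f z ^ 2 ∂D

theorem adjP_differentiable (m : ℕ → ℝ) (t : ℕ) : Differentiable ℝ (adjP m t) := by
  induction t using Nat.strong_induction_on with
  | _ t ih =>
    match t with
    | 0 => simp [adjP]
    | t + 1 =>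
      rw [adjP]
      exact (differentiable_id.pow _).sub (Differentiable.fun_sum fun s _ =>
        (ih (t - s) (Nat.lt_succ_of_le (Nat.sub_le t s))).const_mul _)

/-- Outside `L²` the left-hand side is the junk value `0`, so no integrability is needed. -/
theorem integral_sq_le_sq_integral_add_of_variance_le {Ω : Type*} [MeasurableSpace Ω]
    {D : Measure Ω} [IsProbabilityMeasure D] {f : Ω → ℝ} (hf : AEStronglyMeasurable f D)
    {c : ℝ} (hc : 0 ≤ c) (hvar : variance f D ≤ c) :
    ∫ z, f z ^ 2 ∂D ≤ (∫ z, f z ∂D) ^ 2 + c := by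
  by_cases hint : Integrable (fun z => f z ^ 2) D
  · have hvar_eq := variance_eq_sub ((memLp_two_iff_integrable_sq hf).2 hint)
    simp only [Pi.pow_apply] at hvar_eq
    linarith
  · rw [integral_undef hint]
    positivity

theorem IsPoincare.integral_sq_le {D : Measure ℝ} [IsProbabilityMeasure D] (hD : IsPoincare D)
    {f : ℝ → ℝ} (hf : Differentiable ℝ f) :
    ∫ z, f z ^ 2 ∂D ≤ (∫ z, f z ∂D) ^ 2 + ∫ z, deriv f z ^ 2 ∂D :=
  integral_sq_le_sq_integral_add_of_variance_le hf.continuous.aestronglyMeasurable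
    (integral_nonneg fun _ => sq_nonneg _) (hD f hf)

theorem IsPoincare.integral_adjP_succ_sq_le {D : Measure ℝ} [IsProbabilityMeasure D]
    (hD : IsPoincare D) (μ : ℝ) (m : ℕ → ℝ)
    (hderiv : ∀ t : ℕ, 1 ≤ t → ∀ x, deriv (adjP m t) x = t * adjP m (t - 1) x)
    (hunbiased : ∀ t : ℕ, ∫ z, adjP m t (μ + z) ∂D = μ ^ t) (t : ℕ) :
    ∫ z, adjP m (t + 1) (μ + z) ^ 2 ∂D ≤
      (μ ^ 2) ^ (t + 1) + ((t : ℝ) + 1) ^ 2 * ∫ z, adjP m t (μ + z) ^ 2 ∂D := by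
  have hdiff : Differentiable ℝ fun z => adjP m (t + 1) (μ + z) :=
    (adjP_differentiable m (t + 1)).comp (differentiable_id.const_add μ)
  have hderiv_shift : ∀ z, deriv (fun z => adjP m (t + 1) (μ + z)) z ^ 2 =
      ((t : ℝ) + 1) ^ 2 * adjP m t (μ + z) ^ 2 := fun z => by
    rw [deriv_comp_const_add, hderiv (t + 1) le_add_self]
    push_cast
    ring
  have h := hD.integral_sq_le hdiff
  rwa [hunbiased, pow_right_comm, funext hderiv_shift, integral_const_mul] at h

theorem le_add_sq_pow_of_le_pow_add_sq_mul {c : ℝ} (hc : 0 ≤ c) {a : ℕ → ℝ}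
    (h0 : a 0 ≤ 1)
    (hsucc : ∀ t : ℕ, a (t + 1) ≤ c ^ (t + 1) + ((t : ℝ) + 1) ^ 2 * a t) (t : ℕ) :
    a t ≤ (c + (t : ℝ) ^ 2) ^ t := by
  induction t with
  | zero => simpa using h0
  | succ t ih =>
    set b : ℝ := c + ((t : ℝ) + 1) ^ 2
    have hcb : c ≤ b := le_add_of_nonneg_right (sq_nonneg _)
    have hmono : (c + (t : ℝ) ^ 2) ^ t ≤ b ^ t := by
      gcongr
      show c + (t : ℝ) ^ 2 ≤ c + ((t : ℝ) + 1) ^ 2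
      gcongr
      linarith
    have hc_pow : c ^ t ≤ b ^ t := by gcongr
    calc a (t + 1) ≤ c ^ (t + 1) + ((t : ℝ) + 1) ^ 2 * (c + (t : ℝ) ^ 2) ^ t :=
          (hsucc t).trans (by gcongr)
      _ ≤ c * b ^ t + ((t : ℝ) + 1) ^ 2 * b ^ t := by
          rw [pow_succ']
          gcongr
      _ = (c + ((t + 1 : ℕ) : ℝ) ^ 2) ^ (t + 1) := by push_cast; ring

theorem stmt13_general (D : Measure ℝ) [IsProbabilityMeasure D]
    (hP : ∀ f : ℝ → ℝ, Differentiable ℝ f →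
      variance f D ≤ ∫ z, (deriv f z) ^ 2 ∂D)
    (μ : ℝ) (m : ℕ → ℝ)
    (hderiv : ∀ t : ℕ, 1 ≤ t → ∀ x, deriv (adjP m t) x = t * adjP m (t - 1) x)
    (hunbiased : ∀ t : ℕ, ∫ z, adjP m t (μ + z) ∂D = μ ^ t)
    (t : ℕ) :
    ∫ z, (adjP m t (μ + z)) ^ 2 ∂D ≤ (μ ^ 2 + (t : ℝ) ^ 2) ^ t := by
  have h0 : ∫ z, adjP m 0 (μ + z) ^ 2 ∂D ≤ 1 := by simp [adjP]
  exact le_add_sq_pow_of_le_pow_add_sq_mul (a := fun t => ∫ z, adjP m t (μ + z) ^ 2 ∂D)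
    (sq_nonneg μ) h0 (IsPoincare.integral_adjP_succ_sq_le hP μ m hderiv hunbiased) t

/-- Let `D` be a mean-zero `1`-Poincaré distribution on `ℝ`, `μ ∈ ℝ`, and let `P_t` be the
`D`-adjusted polynomials. Assuming the derivative recurrence `P_t' = t P_{t-1}` and the
unbiasedness identity `E_{z ∼ D(μ)}[P_t(z)] = μ^t`, one has
`E_{z ∼ D(μ)}[P_t(z)²] ≤ (μ² + t²)^t` for every `t ≥ 1`. -/
theorem stmt13 (D : Measure ℝ) [IsProbabilityMeasure D]
    (hP : ∀ f : ℝ → ℝ, Differentiable ℝ f →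
      variance f D ≤ ∫ z, (deriv f z) ^ 2 ∂D)
    (hmean : ∫ z, z ∂D = 0)
    (μ : ℝ) (m : ℕ → ℝ) (hm : ∀ s, m s = ∫ z, z ^ s ∂D)
    (hderiv : ∀ t : ℕ, 1 ≤ t → ∀ x, deriv (adjP m t) x = t * adjP m (t - 1) x)
    (hunbiased : ∀ t : ℕ, ∫ z, adjP m t (μ + z) ∂D = μ ^ t)
    (t : ℕ) (ht : 1 ≤ t) :
    ∫ z, (adjP m t (μ + z)) ^ 2 ∂D ≤ (μ ^ 2 + (t : ℝ) ^ 2) ^ t :=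
  stmt13_general D hP μ m hderiv hunbiased t
end

section
/- Let w₁, …, w_k be positive reals and v₁, …, v_k vectors in ℝ^m, and set M = ∑_i w_i·v_i·v_iᵀ. Suppose Π is an orthogonal projection on ℝ^m such that uᵀMu ≤ w*·ε²·‖u‖² whenever Πu = 0. Then for every index i with w_i ≥ w*, writing u_i = v_i − Π v_i for the component of v_i in the kernel of Π, we have ‖u_i‖ ≤ ε. -/
open scoped RealInnerProductSpace

/-- Let `w₁, …, w_k > 0`, `v₁, …, v_k ∈ ℝ^m`, and `M = ∑ wᵢ vᵢ vᵢᵀ`. If `P` is an orthogonal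
projection on `ℝ^m` with `uᵀ M u ≤ w* ε² ‖u‖²` whenever `P u = 0`, then for every `i` with
`wᵢ ≥ w*`, the component `uᵢ = vᵢ - P vᵢ` of `vᵢ` in the kernel of `P` satisfies `‖uᵢ‖ ≤ ε`. -/
theorem stmt18 {m k : ℕ} (w : Fin k → ℝ) (hw : ∀ i, 0 < w i)
    (v : Fin k → EuclideanSpace ℝ (Fin m))
    (wstar ε : ℝ) (hwstar : 0 < wstar) (hε : 0 < ε)
    (P : EuclideanSpace ℝ (Fin m) →ₗ[ℝ] EuclideanSpace ℝ (Fin m))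
    (hidem : ∀ x, P (P x) = P x)
    (hsa : ∀ x y, ⟪P x, y⟫ = ⟪x, P y⟫)
    (hkernel : ∀ u, P u = 0 → ∑ i, w i * ⟪v i, u⟫ ^ 2 ≤ wstar * ε ^ 2 * ‖u‖ ^ 2)
    (i : Fin k) (hi : wstar ≤ w i) :
    ‖v i - P (v i)‖ ≤ ε := by
  set u : EuclideanSpace ℝ (Fin m) := v i - P (v i) with hu
  have hPu : P u = 0 := by
    simp [hu, map_sub, hidem]
  have hinner : ⟪v i, u⟫ = ‖u‖ ^ 2 := by
    have h1 : ⟪P (v i), u⟫ = 0 := by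
      rw [hsa, hPu, inner_zero_right]
    have : ⟪v i, u⟫ = ⟪u, u⟫ + ⟪P (v i), u⟫ := by
      rw [← inner_add_left]
      congr 1
      simp [hu]
    rw [this, h1, real_inner_self_eq_norm_sq]
    ring
  have hkey := hkernel u hPu
  have hterm : w i * ⟪v i, u⟫ ^ 2 ≤ ∑ j, w j * ⟪v j, u⟫ ^ 2 := by
    apply Finset.single_le_sum (f := fun j => w j * ⟪v j, u⟫ ^ 2)
    · intro j _
      exact mul_nonneg (hw j).le (sq_nonneg _)
    · exact Finset.mem_univ i
  have hmain : w i * (‖u‖ ^ 2) ^ 2 ≤ wstar * ε ^ 2 * ‖u‖ ^ 2 := by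
    calc w i * (‖u‖ ^ 2) ^ 2 = w i * ⟪v i, u⟫ ^ 2 := by rw [hinner]
      _ ≤ _ := le_trans hterm hkey
  rcases eq_or_ne ‖u‖ 0 with h0 | h0
  · rw [h0]; exact hε.le
  · have hpos : 0 < ‖u‖ ^ 2 := by positivity
    have h1 : w i * ‖u‖ ^ 2 ≤ wstar * ε ^ 2 := by
      have := (mul_le_mul_iff_left₀ hpos).mp (by linarith [hmain] : w i * ‖u‖ ^ 2 * ‖u‖ ^ 2 ≤ wstar * ε ^ 2 * ‖u‖ ^ 2)
      exact this
    have h2 : w i * ‖u‖ ^ 2 ≤ w i * ε ^ 2 := by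
      calc w i * ‖u‖ ^ 2 ≤ wstar * ε ^ 2 := h1
        _ ≤ w i * ε ^ 2 := by nlinarith [sq_nonneg ε]
    have h3 : ‖u‖ ^ 2 ≤ ε ^ 2 := (mul_le_mul_iff_right₀ (hw i)).mp h2
    nlinarith [norm_nonneg u]
end

section
/- Let v₁, …, v_r ∈ ℝ^d satisfy ‖v_{j₁} − v_{j₂}‖ ≥ s/2 for all j₁ ≠ j₂, and let μ ∈ ℝ^d and an index j* be such that ‖v_{j*} − μ‖ ≤ 0.1 and s ≥ 1. For j₁ ≠ j₂ let u_{j₁j₂} = (v_{j₁} − v_{j₂})/‖v_{j₁} − v_{j₂}‖. Suppose z ∈ ℝ^d satisfies |u_{j₁j₂}·(z − μ)| ≤ 0.05·s − 0.1 for all pairs j₁ ≠ j₂. Then j* is the unique index j such that |u_{j₁j₂}·(z − v_j)| ≤ 0.1·s for all pairs j₁ ≠ j₂. -/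
open scoped RealInnerProductSpace

/-- Candidate means `v₁, …, v_r` are pairwise `s/2`-separated, `μ` is within `0.1` of `v_{j*}`,
and `z` satisfies `|u_{j₁j₂}·(z - μ)| ≤ 0.05 s - 0.1` for all pairwise difference directions
`u_{j₁j₂}`. Then `j*` is the unique index `j` with `|u_{j₁j₂}·(z - v_j)| ≤ 0.1 s` for all
pairs `j₁ ≠ j₂`. -/
theorem stmt19 {d r : ℕ} (v : Fin r → EuclideanSpace ℝ (Fin d)) (s : ℝ) (hs : 1 ≤ s)
    (hsep : ∀ j₁ j₂, j₁ ≠ j₂ → s / 2 ≤ ‖v j₁ - v j₂‖)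
    (μ : EuclideanSpace ℝ (Fin d)) (jstar : Fin r) (hclose : ‖v jstar - μ‖ ≤ 0.1)
    (z : EuclideanSpace ℝ (Fin d))
    (hz : ∀ j₁ j₂, j₁ ≠ j₂ →
      |⟪‖v j₁ - v j₂‖⁻¹ • (v j₁ - v j₂), z - μ⟫| ≤ 0.05 * s - 0.1) :
    (∀ j₁ j₂, j₁ ≠ j₂ →
      |⟪‖v j₁ - v j₂‖⁻¹ • (v j₁ - v j₂), z - v jstar⟫| ≤ 0.1 * s) ∧
    ∀ j : Fin r,
      (∀ j₁ j₂, j₁ ≠ j₂ →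
        |⟪‖v j₁ - v j₂‖⁻¹ • (v j₁ - v j₂), z - v j⟫| ≤ 0.1 * s) → j = jstar := by
  have hpos : ∀ j₁ j₂, j₁ ≠ j₂ → (0:ℝ) < ‖v j₁ - v j₂‖ := fun j₁ j₂ h =>
    lt_of_lt_of_le (by linarith) (hsep j₁ j₂ h)
  have key : ∀ j₁ j₂, j₁ ≠ j₂ → ∀ w : EuclideanSpace ℝ (Fin d),
      |⟪‖v j₁ - v j₂‖⁻¹ • (v j₁ - v j₂), w⟫| ≤ ‖w‖ := by
    intro j₁ j₂ h w
    rw [real_inner_smul_left, abs_mul, abs_inv, abs_norm]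
    have h1 : ‖v j₁ - v j₂‖⁻¹ * |⟪v j₁ - v j₂, w⟫| ≤
        ‖v j₁ - v j₂‖⁻¹ * (‖v j₁ - v j₂‖ * ‖w‖) :=
      mul_le_mul_of_nonneg_left (abs_real_inner_le_norm _ _) (by positivity)
    have h2 : ‖v j₁ - v j₂‖⁻¹ * (‖v j₁ - v j₂‖ * ‖w‖) = ‖w‖ := by
      rw [← mul_assoc, inv_mul_cancel₀ (hpos j₁ j₂ h).ne', one_mul]
    linarith
  have main : ∀ j₁ j₂, j₁ ≠ j₂ →
      |⟪‖v j₁ - v j₂‖⁻¹ • (v j₁ - v j₂), z - v jstar⟫| ≤ 0.1 * s := by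
    intro j₁ j₂ h
    have h1 := hz j₁ j₂ h
    have h2 : ‖μ - v jstar‖ ≤ 0.1 := by rw [norm_sub_rev]; exact hclose
    have h3 := (key j₁ j₂ h (μ - v jstar)).trans h2
    have hsplit : (z - v jstar : EuclideanSpace ℝ (Fin d)) = (z - μ) + (μ - v jstar) := by
      abel
    rw [hsplit, inner_add_right]
    have h4 := abs_add_le ⟪‖v j₁ - v j₂‖⁻¹ • (v j₁ - v j₂), z - μ⟫
      ⟪‖v j₁ - v j₂‖⁻¹ • (v j₁ - v j₂), μ - v jstar⟫
    linarith
  refine ⟨main, ?_⟩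
  intro j hj
  by_contra hne
  have ha := hj j jstar hne
  have hb := main j jstar hne
  have hx : ⟪‖v j - v jstar‖⁻¹ • (v j - v jstar), v j - v jstar⟫ = ‖v j - v jstar‖ := by
    rw [real_inner_smul_left, real_inner_self_eq_norm_sq]
    have := (hpos j jstar hne).ne'
    field_simp
  have hdiff : (z - v jstar : EuclideanSpace ℝ (Fin d)) - (z - v j) = v j - v jstar := by
    abel
  have heq : ⟪‖v j - v jstar‖⁻¹ • (v j - v jstar), z - v jstar⟫ -
      ⟪‖v j - v jstar‖⁻¹ • (v j - v jstar), z - v j⟫ = ‖v j - v jstar‖ := by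
    rw [← inner_sub_right, hdiff, hx]
  have hsep' := hsep j jstar hne
  rw [abs_le] at ha hb
  linarith [ha.1, ha.2, hb.1, hb.2]
end
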